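/- arXiv:1910.03765 — 3 statements merged into one kernel-verified Lean document; each statement's English description precedes it below -/
import Mathlib

section
/- Let D = {(x,y) ∈ ℝ² : |y| < x and |y| < 2 - x}, viewed as a subset of ℂ via z = x + iy. For every t > 0, every integer n ≥ 1, and every z in the closure of D, one has |z + 2n| · |e^{-(z+2n)²/(4t)}| ≤ 4n e^{-n²/t}. -/
open Complex

/-- The open square `D` with vertices `0, 1+i, 2, 1-i`, viewed in `ℂ` via `z = x + iy`. -/
def Dsq : Set ℂ := {z : ℂ | |z.im| < z.re ∧ |z.im| < 2 - z.re}

/-!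
Write `w = z + 2n`. On the closed square `|Im w| ≤ Re w - 2n`, so `Re (w²) ≥ (2n)²` and the Gaussian
factor is at most `e^{-n²/t}`; and `|z| ≤ 2 ≤ 2n` there, so `|w| ≤ 4n`.
-/

theorem abs_im_le_of_mem_closure_Dsq {z : ℂ} (hz : z ∈ closure Dsq) :
    |z.im| ≤ z.re ∧ |z.im| ≤ 2 - z.re := by
  have hcl := closure_inter_subset_inter_closure {z : ℂ | |z.im| < z.re}
    {z : ℂ | |z.im| < 2 - z.re} hz
  exact ⟨closure_lt_subset_le (by fun_prop) (by fun_prop) hcl.1,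
    closure_lt_subset_le (by fun_prop) (by fun_prop) hcl.2⟩

theorem norm_le_two_of_mem_closure_Dsq {z : ℂ} (hz : z ∈ closure Dsq) : ‖z‖ ≤ 2 := by
  obtain ⟨h₁, h₂⟩ := abs_im_le_of_mem_closure_Dsq hz
  have him_sq : z.im ^ 2 ≤ z.re * (2 - z.re) := by
    rw [← sq_abs, sq]
    exact mul_le_mul h₁ h₂ (abs_nonneg _) ((abs_nonneg _).trans h₁)
  rw [← abs_norm, ← abs_two, ← sq_le_sq, Complex.sq_norm, Complex.normSq_apply]
  nlinarith

theorem sq_le_re_sq_of_abs_im_le {w : ℂ} {s : ℝ} (hs : 0 ≤ s) (h : |w.im| ≤ w.re - s) :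
    s ^ 2 ≤ (w ^ 2).re := by
  have him_sq : w.im ^ 2 ≤ (w.re - s) ^ 2 := sq_le_sq' (abs_le.mp h).1 (abs_le.mp h).2
  have hre : s ≤ w.re := by linarith [abs_nonneg w.im]
  rw [sq w, Complex.mul_re]
  nlinarith

theorem norm_exp_neg_sq_div_le {w : ℂ} {s c : ℝ} (hc : 0 < c) (hs : 0 ≤ s)
    (h : |w.im| ≤ w.re - s) : ‖exp (-w ^ 2 / c)‖ ≤ Real.exp (-s ^ 2 / c) := by
  rw [Complex.norm_exp, Complex.div_ofReal_re, Complex.neg_re, Real.exp_le_exp]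
  gcongr
  exact sq_le_re_sq_of_abs_im_le hs h

/-- For `t > 0`, `n ≥ 1` and `z` in the closure of `D`,
`|z + 2n| · |e^{-(z+2n)²/(4t)}| ≤ 4n e^{-n²/t}`. -/
theorem heat_kernel_bound_pos_n (t : ℝ) (ht : 0 < t) (n : ℤ) (hn : 1 ≤ n)
    (z : ℂ) (hz : z ∈ closure Dsq) :
    ‖z + 2 * (n : ℂ)‖ * ‖Complex.exp (-(z + 2 * (n : ℂ)) ^ 2 / (4 * (t : ℂ)))‖ ≤
      4 * (n : ℝ) * Real.exp (-(n : ℝ) ^ 2 / t) := by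
  have hn' : (1 : ℝ) ≤ n := by exact_mod_cast hn
  have hnorm : ‖z + 2 * (n : ℂ)‖ ≤ 4 * n := by
    have h2n : ‖2 * (n : ℂ)‖ = 2 * n := by
      rw [norm_mul, Complex.norm_two, Complex.norm_intCast, abs_of_pos (by linarith)]
    linarith [norm_add_le z (2 * (n : ℂ)), norm_le_two_of_mem_closure_Dsq hz]
  have hexp : ‖exp (-(z + 2 * (n : ℂ)) ^ 2 / (4 * (t : ℂ)))‖ ≤ Real.exp (-(n : ℝ) ^ 2 / t) := by
    have hsq : |(z + 2 * (n : ℂ)).im| ≤ (z + 2 * (n : ℂ)).re - 2 * n := by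
      simpa using (abs_im_le_of_mem_closure_Dsq hz).1
    have h := norm_exp_neg_sq_div_le (c := 4 * t) (by positivity) (by positivity) hsq
    push_cast at h
    convert h using 2
    field_simp
    ring
  gcongr
end

section
/- Define ∂ₓK(z,t) = -z/(4√π t^{3/2}) e^{-z²/(4t)}. For every t > 0, every integer n with n ∉ {-1, 0}, and every z in the closure of D (the closed square with vertices 0, 1+i, 2, 1-i), one has ∫₀ᵗ |∂ₓK(z + 2n, t - τ)|² dτ ≤ (4/π)(1 + 1/t) e^{-n²/(2t)}. -/
open Complex MeasureTheory

/-- `∂ₓK(z,t) = -z/(4√π t^{3/2}) e^{-z²/(4t)}`. -/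
noncomputable def dxK (z : ℂ) (t : ℝ) : ℂ :=
  -z / (4 * Real.sqrt Real.pi * (t ^ ((3:ℝ)/2) : ℝ)) * Complex.exp (-z ^ 2 / (4 * (t : ℂ)))

/-!
Since `|e^{-w²/(4s)}|² = e^{-Re(w²)/(2s)}`, the integrand equals `|w|²/(16π) · e^{-c/s}/s³`
with `s = t - τ`, `w = z + 2n` and `c = Re(w²)/2`, and `e^{-c/s}(1/(cs) + 1/c²)` is an
antiderivative of `e^{-c/s}/s³` vanishing at `s = 0⁺`. For `z` in the closed square and
`n ∉ {-1, 0}` one has `Re(w²) ≥ n² ≥ 1 ≥ (Im w)²`, hence `|w|² ≤ 3 Re(w²)`, and the bound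
follows.
-/

open Real Set Filter Topology

section ExpNegDiv

variable {c : ℝ}

theorem hasDerivAt_exp_neg_div_mul (hc : c ≠ 0) {s : ℝ} (hs : s ≠ 0) :
    HasDerivAt (fun s => rexp (-c / s) * (1 / (c * s) + 1 / c ^ 2)) (rexp (-c / s) / s ^ 3) s := by
  have hinner : HasDerivAt (fun s => -c / s) (c / s ^ 2) s := by
    have h := (hasDerivAt_inv hs).const_mul (-c)
    simp only [← div_eq_mul_inv] at h
    exact h.congr_deriv (by ring)
  have hpoly : HasDerivAt (fun s => 1 / (c * s) + 1 / c ^ 2) (-(1 / (c * s ^ 2))) s := by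
    have h := ((hasDerivAt_inv hs).const_mul c⁻¹).add_const (1 / c ^ 2)
    simp only [← mul_inv] at h
    simp only [← one_div] at h
    exact h.congr_deriv (by ring)
  refine ((Real.hasDerivAt_exp _).comp s hinner |>.mul hpoly).congr_deriv ?_
  simp only [Function.comp_apply]
  field_simp
  ring

theorem tendsto_exp_neg_div_mul_nhdsGT_zero (hc : 0 < c) :
    Tendsto (fun s => rexp (-c / s) * (1 / (c * s) + 1 / c ^ 2)) (𝓝[>] 0) (𝓝 0) := by
  have hinv : Tendsto (fun s : ℝ => c / s) (𝓝[>] 0) atTop :=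
    tendsto_id.inv_tendsto_nhdsGT_zero.const_mul_atTop hc |>.congr fun s =>
      (div_eq_mul_inv c s).symm
  have hlin : Tendsto (fun u => rexp (-u) * (u + 1)) atTop (𝓝 0) := by
    simpa [mul_add, add_mul, mul_comm] using
      (Real.tendsto_pow_mul_exp_neg_atTop_nhds_zero 1).add Real.tendsto_exp_neg_atTop_nhds_zero
  have := (hlin.comp hinv).div_const (c ^ 2)
  rw [zero_div] at this
  refine this.congr' (eventually_nhdsWithin_of_forall fun s (hs : 0 < s) => ?_)
  simp only [Function.comp, neg_div]
  field_simp

theorem exp_neg_div_div_pow_three_le (hc : 0 < c) {s : ℝ} (hs : 0 < s) :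
    rexp (-c / s) / s ^ 3 ≤ 6 / c ^ 3 := by
  have hcube := Real.pow_div_factorial_le_exp _ (div_pos hc hs).le 3
  norm_num [Nat.factorial, div_pow, div_div, div_le_iff₀ (by positivity : 0 < s ^ 3 * 6)] at hcube
  rw [neg_div, Real.exp_neg, div_le_div_iff₀ (by positivity) (by positivity),
    inv_mul_le_iff₀ (Real.exp_pos _)]
  linarith

theorem intervalIntegrable_exp_neg_div_div_pow_three (hc : 0 < c) {t : ℝ} (ht : 0 < t) :
    IntervalIntegrable (fun s => rexp (-c / s) / s ^ 3) volume 0 t := by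
  rw [intervalIntegrable_iff_integrableOn_Ioc_of_le ht.le]
  have hcont : ContinuousOn (fun s : ℝ => rexp (-c / s) / s ^ 3) (Ioc 0 t) :=
    ContinuousOn.div (by fun_prop (disch := exact fun s hs => hs.1.ne')) (by fun_prop)
      fun s hs => pow_ne_zero 3 hs.1.ne'
  refine IntegrableOn.of_bound measure_Ioc_lt_top (hcont.aestronglyMeasurable measurableSet_Ioc)
    (6 / c ^ 3) ?_
  filter_upwards [ae_restrict_mem measurableSet_Ioc] with s hs
  rw [norm_of_nonneg (by have := hs.1; positivity)]
  exact exp_neg_div_div_pow_three_le hc hs.1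

theorem integral_exp_neg_div_sub_div_pow_three (hc : 0 < c) {t : ℝ} (ht : 0 < t) :
    ∫ τ in Ioo 0 t, rexp (-c / (t - τ)) / (t - τ) ^ 3 =
      rexp (-c / t) * (1 / (c * t) + 1 / c ^ 2) := by
  have hFTC : ∫ s in (0)..t, rexp (-c / s) / s ^ 3 =
      rexp (-c / t) * (1 / (c * t) + 1 / c ^ 2) - 0 :=
    intervalIntegral.integral_eq_sub_of_hasDerivAt_of_tendsto ht
      (fun s hs => hasDerivAt_exp_neg_div_mul hc.ne' hs.1.ne')
      (intervalIntegrable_exp_neg_div_div_pow_three hc ht) (tendsto_exp_neg_div_mul_nhdsGT_zero hc)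
      ((hasDerivAt_exp_neg_div_mul hc.ne' ht.ne').continuousAt.tendsto.mono_left nhdsWithin_le_nhds)
  rw [← integral_Ioc_eq_integral_Ioo, ← intervalIntegral.integral_of_le ht.le,
    intervalIntegral.integral_comp_sub_left (fun s => rexp (-c / s) / s ^ 3), sub_self, sub_zero,
    hFTC, sub_zero]

end ExpNegDiv

theorem norm_dxK_sq (w : ℂ) {s : ℝ} (hs : 0 < s) :
    ‖dxK w s‖ ^ 2 = ‖w‖ ^ 2 / (16 * π) * (rexp (-((w ^ 2).re / 2) / s) / s ^ 3) := by
  have hpow : (s ^ ((3 : ℝ) / 2)) ^ 2 = s ^ 3 := by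
    rw [← rpow_mul_natCast hs.le]; norm_num
  have hre : (-w ^ 2 / (4 * (s : ℂ))).re = -(w ^ 2).re / (4 * s) := by
    rw [show (4 * (s : ℂ)) = ((4 * s : ℝ) : ℂ) by push_cast; ring, div_ofReal_re, neg_re]
  rw [dxK, norm_mul, norm_div, norm_neg, norm_exp, hre, norm_mul, norm_mul, norm_real,
    norm_real, norm_of_nonneg (by positivity), norm_of_nonneg (by positivity), Complex.norm_ofNat,
    mul_pow, div_pow, mul_pow, mul_pow, hpow, sq_sqrt pi_pos.le, ← Real.exp_nat_mul]
  field_simp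
  ring_nf

theorem norm_sq_le_three_mul_re_sq {w : ℂ} (h : w.im ^ 2 ≤ (w ^ 2).re) :
    ‖w‖ ^ 2 ≤ 3 * (w ^ 2).re := by
  rw [Complex.sq_norm, normSq_apply]
  simp only [sq, mul_re] at h ⊢
  linarith

theorem closure_Dsq_subset : closure Dsq ⊆ {z | |z.im| ≤ z.re ∧ |z.im| ≤ 2 - z.re} :=
  (closure_inter_subset_inter_closure _ _).trans <| inter_subset_inter
    (closure_lt_subset_le (continuous_abs.comp continuous_im) continuous_re)
    (closure_lt_subset_le (continuous_abs.comp continuous_im)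
      (continuous_const.sub continuous_re))

theorem im_sq_le_one_of_mem_closure_Dsq {z : ℂ} (hz : z ∈ closure Dsq) : z.im ^ 2 ≤ 1 := by
  obtain ⟨h₁, h₂⟩ := closure_Dsq_subset hz
  nlinarith [abs_nonneg z.im, sq_abs z.im]

theorem sq_le_re_sq_of_mem_closure_Dsq {z : ℂ} (hz : z ∈ closure Dsq) {n : ℤ} (hn : n ≠ -1)
    (hn' : n ≠ 0) : (n : ℝ) ^ 2 ≤ ((z + 2 * n) ^ 2).re := by
  obtain ⟨h₁, h₂⟩ := closure_Dsq_subset hz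
  have hre : ((z + 2 * n) ^ 2).re = (z.re + 2 * n) ^ 2 - z.im ^ 2 := by simp [sq]
  rw [hre]
  -- `n ≤ -2` uses the side `|Im z| ≤ 2 - Re z` of the square, `n ≥ 1` the side `|Im z| ≤ Re z`
  rcases le_or_gt n (-2) with hneg | hpos
  · have : (n : ℝ) ≤ -2 := by exact_mod_cast hneg
    nlinarith [abs_nonneg z.im, sq_abs z.im]
  · have : (1 : ℝ) ≤ n := by exact_mod_cast (show 1 ≤ n by omega)
    nlinarith [abs_nonneg z.im, sq_abs z.im]

theorem integral_norm_dxK_sq {t : ℝ} (ht : 0 < t) {w : ℂ} (hw : 0 < (w ^ 2).re) :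
    ∫ τ in Ioo 0 t, ‖dxK w (t - τ)‖ ^ 2 = ‖w‖ ^ 2 / (16 * π) *
      (rexp (-((w ^ 2).re / 2) / t) * (1 / ((w ^ 2).re / 2 * t) + 1 / ((w ^ 2).re / 2) ^ 2)) := by
  rw [setIntegral_congr_fun measurableSet_Ioo fun τ hτ => norm_dxK_sq w (sub_pos.2 hτ.2),
    integral_const_mul, integral_exp_neg_div_sub_div_pow_three (half_pos hw) ht]

theorem integral_norm_dxK_sq_le {t : ℝ} (ht : 0 < t) {w : ℂ} {m : ℝ} (hm : 1 ≤ m)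
    (hmw : m ≤ (w ^ 2).re) (hw : ‖w‖ ^ 2 ≤ 3 * (w ^ 2).re) :
    ∫ τ in Ioo 0 t, ‖dxK w (t - τ)‖ ^ 2 ≤ 4 / π * (1 + 1 / t) * rexp (-m / (2 * t)) := by
  set a := (w ^ 2).re
  have ha : 0 < a := by linarith
  have hexp : rexp (-(a / 2) / t) ≤ rexp (-m / (2 * t)) := by
    rw [exp_le_exp, neg_div, neg_div, div_div, neg_le_neg_iff]
    gcongr
  have hcoef :
      ‖w‖ ^ 2 / (16 * π) * (1 / (a / 2 * t) + 1 / (a / 2) ^ 2) ≤ 4 / π * (1 + 1 / t) := by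
    calc ‖w‖ ^ 2 / (16 * π) * (1 / (a / 2 * t) + 1 / (a / 2) ^ 2)
        ≤ 3 * a / (16 * π) * (1 / (a / 2 * t) + 1 / (a / 2) ^ 2) := by gcongr
      _ = 3 / (8 * π) * (1 / t) + 3 / (4 * π) * (1 / a) := by field_simp; ring
      _ ≤ 4 / π * (1 / t) + 4 / π * 1 := by
        have h8 : 3 / (8 * π) ≤ 4 / π := by
          rw [div_le_div_iff₀ (by positivity) pi_pos]; nlinarith [pi_pos]
        have h4 : 3 / (4 * π) ≤ 4 / π := by
          rw [div_le_div_iff₀ (by positivity) pi_pos]; nlinarith [pi_pos]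
        have ha1 : 1 / a ≤ 1 := (div_le_one ha).2 (by linarith)
        gcongr
      _ = 4 / π * (1 + 1 / t) := by ring
  rw [integral_norm_dxK_sq ht ha]
  calc ‖w‖ ^ 2 / (16 * π) * (rexp (-(a / 2) / t) * (1 / (a / 2 * t) + 1 / (a / 2) ^ 2))
      = ‖w‖ ^ 2 / (16 * π) * (1 / (a / 2 * t) + 1 / (a / 2) ^ 2) * rexp (-(a / 2) / t) := by ring
    _ ≤ 4 / π * (1 + 1 / t) * rexp (-m / (2 * t)) := by gcongr

/-- For `t > 0`, `n ∉ {-1, 0}` and `z` in the closure of `D`,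
`∫₀ᵗ |∂ₓK(z+2n, t-τ)|² dτ ≤ (4/π)(1 + 1/t) e^{-n²/(2t)}`. -/
theorem integral_sq_bound (t : ℝ) (ht : 0 < t) (n : ℤ) (hn : n ≠ -1) (hn' : n ≠ 0)
    (z : ℂ) (hz : z ∈ closure Dsq) :
    ∫ τ in Set.Ioo (0:ℝ) t, ‖dxK (z + 2 * (n : ℂ)) (t - τ)‖ ^ 2 ≤
      (4 / Real.pi) * (1 + 1 / t) * Real.exp (-(n : ℝ) ^ 2 / (2 * t)) := by
  have hre := sq_le_re_sq_of_mem_closure_Dsq hz hn hn'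
  have hn1 : (1 : ℝ) ≤ (n : ℝ) ^ 2 :=
    (one_le_sq_iff_one_le_abs _).2 (by exact_mod_cast Int.one_le_abs hn')
  refine integral_norm_dxK_sq_le ht hn1 hre (norm_sq_le_three_mul_re_sq ?_)
  have him : (z + 2 * (n : ℂ)).im = z.im := by simp
  rw [him]
  linarith [im_sq_le_one_of_mem_closure_Dsq hz]
end

section
/- There are no z in the closure of D and w in D (where D is the open square {(x,y) : |y| < x, |y| < 2-x} ⊂ ℂ) and integers n, m such that (z + 2n)² + (w̄ + 2m)² = 0. Equivalently, for all z ∈ cl(D), w ∈ D, n, m ∈ ℤ, one has (z + 2n)² + (w̄ + 2m)² ≠ 0. -/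
open Complex

lemma helper_real (zr zi wr wi : ℝ) (n m : ℤ)
    (h1 : |zi| ≤ zr) (h2 : |zi| ≤ 2 - zr)
    (h3 : |wi| < wr) (h4 : |wi| < 2 - wr)
    (e1 : zr + 2 * n = wi) (e2 : zi = wr + 2 * m) : False := by
  rw [abs_le] at h1 h2
  rw [abs_lt] at h3 h4
  have hzr0 : 0 ≤ zr := by linarith [abs_nonneg zi]
  have hzr2 : zr ≤ 2 := by linarith
  have hwi1 : wi < 1 := by linarith
  have hwi1' : -1 < wi := by linarith
  have hzi1 : zi ≤ 1 := by linarith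
  have hzi1' : -1 ≤ zi := by linarith
  have hwr0 : 0 < wr := by linarith [abs_nonneg wi]
  have hwr2 : wr < 2 := by linarith
  have hn0 : n ≤ 0 := by
    by_contra hc
    push_neg at hc
    have : (1 : ℝ) ≤ n := by exact_mod_cast hc
    linarith
  have hn1 : -1 ≤ n := by
    by_contra hc
    push_neg at hc
    have hn2 : n ≤ -2 := by omega
    have : (n : ℝ) ≤ -2 := by exact_mod_cast hn2
    linarith
  have hm0 : m ≤ 0 := by
    by_contra hc
    push_neg at hc
    have : (1 : ℝ) ≤ m := by exact_mod_cast hc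
    linarith
  have hm1 : -1 ≤ m := by
    by_contra hc
    push_neg at hc
    have hm2 : m ≤ -2 := by omega
    have : (m : ℝ) ≤ -2 := by exact_mod_cast hm2
    linarith
  interval_cases n <;> interval_cases m <;> push_cast at e1 e2 <;> linarith

/-- For all `z ∈ cl(D)`, `w ∈ D` and `n, m ∈ ℤ`, `(z+2n)² + (w̄+2m)² ≠ 0`. -/
theorem sum_of_squares_ne_zero (z : ℂ) (hz : z ∈ closure Dsq) (w : ℂ) (hw : w ∈ Dsq)
    (n m : ℤ) :
    (z + 2 * (n : ℂ)) ^ 2 + ((starRingEnd ℂ) w + 2 * (m : ℂ)) ^ 2 ≠ 0 := by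
  have hS : IsClosed {u : ℂ | |u.im| ≤ u.re ∧ |u.im| ≤ 2 - u.re} := by
    apply IsClosed.inter
    · exact isClosed_le (continuous_abs.comp Complex.continuous_im) Complex.continuous_re
    · exact isClosed_le (continuous_abs.comp Complex.continuous_im)
        (continuous_const.sub Complex.continuous_re)
  have hsub : Dsq ⊆ {u : ℂ | |u.im| ≤ u.re ∧ |u.im| ≤ 2 - u.re} :=
    fun x hx => ⟨hx.1.le, hx.2.le⟩
  have hz' : |z.im| ≤ z.re ∧ |z.im| ≤ 2 - z.re := closure_minimal hsub hS hz
  obtain ⟨h1, h2⟩ := hz'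
  obtain ⟨h3, h4⟩ := hw
  intro h
  set a : ℂ := z + 2 * (n : ℂ) with ha
  set b : ℂ := (starRingEnd ℂ) w + 2 * (m : ℂ) with hb
  have key : (a + I * b) * (a - I * b) = 0 := by
    linear_combination h - b ^ 2 * Complex.I_sq
  have hare : a.re = z.re + 2 * n := by simp [ha]
  have haim : a.im = z.im := by simp [ha]
  have hbre : b.re = w.re + 2 * m := by simp [hb]
  have hbim : b.im = -w.im := by simp [hb]
  rcases mul_eq_zero.mp key with hk | hk
  · -- a = -I*b : re a = im b = -wi, im a = -re b
    have e1 := congrArg Complex.re hk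
    have e2 := congrArg Complex.im hk
    simp [Complex.add_re, Complex.add_im, Complex.mul_re, Complex.mul_im] at e1 e2
    rw [hare, hbim] at e1
    rw [haim, hbre] at e2
    exact helper_real z.re (-z.im) w.re (-w.im) n m
      (by rwa [abs_neg]) (by rwa [abs_neg]) (by rwa [abs_neg]) (by rwa [abs_neg])
      (by linarith) (by linarith)
  · -- a = I*b : re a = -im b = wi, im a = re b
    have e1 := congrArg Complex.re hk
    have e2 := congrArg Complex.im hk
    simp [Complex.sub_re, Complex.sub_im, Complex.mul_re, Complex.mul_im] at e1 e2
    rw [hare, hbim] at e1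
    rw [haim, hbre] at e2
    exact helper_real z.re z.im w.re w.im n m h1 h2 h3 h4 (by linarith) (by linarith)
end
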